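/- arXiv:1402.1825 — 2 statements merged into one kernel-verified Lean document; each statement's English description precedes it below -/
import Mathlib

section
/- Let N ≥ 1 be an integer, a < b real numbers, and for 0 ≤ k ≤ N-1 define H_k^-(x) = ((b-x)/(b-a))^N · ((x-a)^k / k!) · ∑_{ℓ=0}^{N-k-1} C(ℓ+N-1, ℓ) ((x-a)/(b-a))^ℓ. Then for all 0 ≤ k, ℓ ≤ N-1: the ℓ-th derivative of H_k^- at a equals 1 if k = ℓ and 0 otherwise, and the ℓ-th derivative of H_k^- at b equals 0. -/
/-!
Write `c = b - a`. Since `C(j+N-1, j)` are the Taylor coefficients of `(1 - t)⁻ᴺ`, the truncation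
`S(t) = ∑_{j < N-k} C(j+N-1, j) tʲ` satisfies `(1 - t)ᴺ S(t) ≡ 1 mod t^(N-k)`. Expanding at `a`,
with `x = a + c t`, gives `H_k^-(x) = cᵏ tᵏ / k! · (1 - t)ᴺ S(t) ≡ (x - a)ᵏ / k! mod (x - a)ᴺ`,
which determines the derivatives of order `< N` at `a`. At `b`, `H_k^-` has the factor `(x - b)ᴺ`.
-/

open Polynomial Finset
open scoped Nat

namespace Polynomial

theorem iterate_derivative_eval_eq_factorial_mul_taylor_coeff {R : Type*} [CommSemiring R]
    (p : R[X]) (r : R) (n : ℕ) :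
    (derivative^[n] p).eval r = n ! * (taylor r p).coeff n := by
  rw [taylor_coeff, ← factorial_smul_hasseDeriv, LinearMap.smul_apply, eval_smul, nsmul_eq_mul]

theorem iteratedDeriv_eval {𝕜 : Type*} [NontriviallyNormedField 𝕜] (p : 𝕜[X]) (n : ℕ) :
    iteratedDeriv n (fun x => p.eval x) = fun x => (derivative^[n] p).eval x := by
  induction n with
  | zero => simp
  | succ n ih =>
    ext x
    rw [iteratedDeriv_succ, ih, Function.iterate_succ_apply']
    exact Polynomial.deriv _

section InvOneSubPow

variable {R : Type*} [CommRing R]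

noncomputable def truncInvOneSubPow (N M : ℕ) : R[X] :=
  ∑ j ∈ range M, C ((j + N - 1).choose j : R) * X ^ j

theorem truncInvOneSubPow_eq_trunc {N : ℕ} (hN : 0 < N) (M : ℕ) :
    (truncInvOneSubPow N M : R[X]) = PowerSeries.trunc M (PowerSeries.invOneSubPow R N).val := by
  rw [PowerSeries.invOneSubPow_val_eq_mk_sub_one_add_choose_of_pos _ _ hN]
  ext m
  simp only [truncInvOneSubPow, finsetSum_coeff, coeff_C_mul_X_pow, PowerSeries.coeff_trunc,
    PowerSeries.coeff_mk, sum_ite_eq, mem_range]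
  rw [show m + N - 1 = m + (N - 1) by omega, Nat.choose_symm_add, add_comm]

theorem X_pow_dvd_one_sub_X_pow_mul_truncInvOneSubPow_sub_one {N : ℕ} (hN : 0 < N) (M : ℕ) :
    X ^ M ∣ (1 - X) ^ N * (truncInvOneSubPow N M : R[X]) - 1 := by
  have htrunc : PowerSeries.trunc M
      (((1 - X) ^ N * truncInvOneSubPow N M : R[X]) : PowerSeries R) = PowerSeries.trunc M 1 := by
    rw [truncInvOneSubPow_eq_trunc hN, coe_mul, PowerSeries.trunc_mul_trunc, coe_pow, coe_sub,
      coe_one, coe_X, ← PowerSeries.invOneSubPow_inv_eq_one_sub_pow, Units.inv_val]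
  refine X_pow_dvd_iff.mpr fun d hd => ?_
  have hcoeff := congrArg (coeff · d) htrunc
  simp only [PowerSeries.coeff_trunc, hd, if_true, coeff_coe, ← coe_one] at hcoeff
  rw [coeff_sub, hcoeff, sub_self]

theorem X_pow_dvd_comp_C_mul_X {p : R[X]} {n : ℕ} (h : X ^ n ∣ p) (r : R) :
    X ^ n ∣ p.comp (C r * X) := by
  obtain ⟨q, rfl⟩ := h
  rw [mul_comp, X_pow_comp, mul_pow, mul_assoc]
  exact (dvd_mul_right _ _).mul_left _

end InvOneSubPow

section Hermite

variable {K : Type*} [Field K] {N k l : ℕ} {a b : K}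

/-- The Hermite basis polynomial `H_k^-` for the nodes `a`, `b`, each of multiplicity `N`. -/
noncomputable def hermiteLeft (N k : ℕ) (a b : K) : K[X] :=
  ((C b - X) * C (b - a)⁻¹) ^ N * (C (k ! : K)⁻¹ * (X - C a) ^ k) *
    (truncInvOneSubPow N (N - k)).comp ((X - C a) * C (b - a)⁻¹)

theorem eval_hermiteLeft (N k : ℕ) (a b x : K) :
    (hermiteLeft N k a b).eval x = ((b - x) / (b - a)) ^ N * ((x - a) ^ k / (k ! : K)) *
      ∑ j ∈ range (N - k), ((j + N - 1).choose j : K) * ((x - a) / (b - a)) ^ j := by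
  simp only [hermiteLeft, truncInvOneSubPow, eval_mul, eval_pow, eval_sub, eval_C, eval_X,
    eval_comp, eval_finsetSum, div_eq_mul_inv]
  ring

theorem X_sub_C_pow_dvd_hermiteLeft (N k : ℕ) (a b : K) :
    (X - C b) ^ N ∣ hermiteLeft N k a b :=
  ((pow_dvd_pow_of_dvd (dvd_sub_comm.mp dvd_rfl |>.mul_right _) N).mul_right _).mul_right _

theorem iterate_derivative_hermiteLeft_eval_right (hl : l < N) :
    (derivative^[l] (hermiteLeft N k a b)).eval b = 0 :=
  dvd_iff_isRoot.mp <| (dvd_pow_self _ (by omega)).trans <|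
    pow_sub_dvd_iterate_derivative_of_pow_dvd l (X_sub_C_pow_dvd_hermiteLeft N k a b)

theorem taylor_hermiteLeft (hab : a ≠ b) :
    taylor a (hermiteLeft N k a b) = C (k ! : K)⁻¹ * X ^ k *
      ((1 - X) ^ N * truncInvOneSubPow N (N - k)).comp (C (b - a)⁻¹ * X) := by
  have hnode : (C b - (X + C a)) * C (b - a)⁻¹ = 1 - C (b - a)⁻¹ * X := by
    rw [show C b - (X + C a) = C (b - a) - X by rw [C_sub]; ring, sub_mul, ← C_mul,
      mul_inv_cancel₀ (sub_ne_zero.mpr hab.symm), C_1, mul_comm]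
  rw [taylor_apply]
  simp only [hermiteLeft, mul_comp, pow_comp, sub_comp, one_comp, C_comp, X_comp, comp_assoc,
    add_sub_cancel_right, hnode, mul_comm X]
  ring

theorem taylor_hermiteLeft_coeff (hab : a ≠ b) (hk : k < N) (hl : l < N) :
    (taylor a (hermiteLeft N k a b)).coeff l = if k = l then (k ! : K)⁻¹ else 0 := by
  have hdvd : X ^ (k + (N - k)) ∣ taylor a (hermiteLeft N k a b) - C (k ! : K)⁻¹ * X ^ k := by
    have hseries : X ^ (N - k) ∣
        ((1 - X) ^ N * truncInvOneSubPow N (N - k)).comp (C (b - a)⁻¹ * X) - 1 := by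
      simpa only [sub_comp, one_comp] using X_pow_dvd_comp_C_mul_X
        (X_pow_dvd_one_sub_X_pow_mul_truncInvOneSubPow_sub_one (by omega) _) (b - a)⁻¹
    rw [taylor_hermiteLeft hab, ← mul_sub_one, pow_add]
    exact mul_dvd_mul (dvd_mul_left _ _) hseries
  have hcoeff := X_pow_dvd_iff.mp hdvd l (by omega)
  rw [coeff_sub, sub_eq_zero, coeff_C_mul_X_pow] at hcoeff
  simp only [hcoeff, eq_comm]

theorem iterate_derivative_hermiteLeft_eval_left [CharZero K] (hab : a ≠ b) (hk : k < N)
    (hl : l < N) : (derivative^[l] (hermiteLeft N k a b)).eval a = if k = l then 1 else 0 := by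
  rw [iterate_derivative_eval_eq_factorial_mul_taylor_coeff, taylor_hermiteLeft_coeff hab hk hl]
  split_ifs with hkl
  · subst hkl
    exact mul_inv_cancel₀ (Nat.cast_ne_zero.mpr k.factorial_ne_zero)
  · exact mul_zero _

end Hermite

end Polynomial

theorem stmt_4 (N : ℕ) (hN : 1 ≤ N) (a b : ℝ) (hab : a < b)
    (k l : ℕ) (hk : k ≤ N - 1) (hl : l ≤ N - 1) :
    iteratedDeriv l (fun x : ℝ =>
      ((b - x) / (b - a)) ^ N * ((x - a) ^ k / (Nat.factorial k : ℝ)) *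
        ∑ j ∈ Finset.range (N - k),
          (Nat.choose (j + N - 1) j : ℝ) * ((x - a) / (b - a)) ^ j) a
      = (if k = l then 1 else 0) ∧
    iteratedDeriv l (fun x : ℝ =>
      ((b - x) / (b - a)) ^ N * ((x - a) ^ k / (Nat.factorial k : ℝ)) *
        ∑ j ∈ Finset.range (N - k),
          (Nat.choose (j + N - 1) j : ℝ) * ((x - a) / (b - a)) ^ j) b
      = 0 := by
  simp only [← eval_hermiteLeft, iteratedDeriv_eval]
  exact ⟨iterate_derivative_hermiteLeft_eval_left hab.ne (by omega) (by omega),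
    iterate_derivative_hermiteLeft_eval_right (by omega)⟩
end

section
/- Let N ≥ 1 and p ≥ 0 be integers, and a, b real numbers. Define c_n = ∑_{k=0}^{n} C(N+k-1,k)·C(N+n-1-k,n-k)·a^k·b^{n-k}. Then the remainder of the Euclidean division of x^{2N+p} by (x-a)^N(x-b)^N equals x^{2N+p} - (∑_{n=0}^{p} c_{p-n} x^n)·(x-a)^N(x-b)^N, i.e., x^{2N+p} - (∑_{n=0}^{p} c_{p-n} x^n)(x-a)^N(x-b)^N is a polynomial of degree at most 2N-1. -/
/-!
The `c_n` are the Taylor coefficients of `1 / ((1 - a x) ^ N (1 - b x) ^ N)`, the Cauchy product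
of two negative binomial series. Reversing polynomials at degree `2N + p` exchanges high and low
degrees: `(x - a) ^ N (x - b) ^ N` becomes `q = (1 - a x) ^ N (1 - b x) ^ N`, the claimed quotient
becomes the truncation `g = ∑_{n ≤ p} c_n x^n`, and `x ^ (2N + p)` becomes `1`. Since `g q ≡ 1`
modulo `x ^ (p + 1)`, the reversal of `1 - g q` has degree below `2N`.
-/

open Polynomial Finset

namespace Polynomial

variable {R : Type*} [CommRing R]

theorem reflect_pow {f : R[X]} {n : ℕ} (hf : f.natDegree ≤ n) (k : ℕ) :
    reflect (k * n) (f ^ k) = reflect n f ^ k := by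
  induction k with
  | zero => simp [reflect_one]
  | succ k ih =>
    rw [pow_succ, add_one_mul, reflect_mul _ _ (natDegree_pow_le_of_le k hf) hf, ih, pow_succ]

theorem reflect_one_sub_C_mul_X (a : R) : reflect 1 (1 - C a * X) = X - C a := by
  rw [reflect_sub, reflect_one, ← pow_one X, reflect_C_mul_X_pow, revAt_le le_rfl, pow_one,
    pow_zero, mul_one]

theorem reflect_one_sub_C_mul_X_pow_mul_pow (a b : R) (N : ℕ) :
    reflect (2 * N) ((1 - C a * X) ^ N * (1 - C b * X) ^ N) = (X - C a) ^ N * (X - C b) ^ N := by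
  have hlin (c : R) : (1 - C c * X).natDegree ≤ 1 := by compute_degree
  have hpow (c : R) : reflect N ((1 - C c * X) ^ N) = (X - C c) ^ N := by
    simpa [reflect_one_sub_C_mul_X] using reflect_pow (hlin c) N
  have hdeg (c : R) : ((1 - C c * X) ^ N).natDegree ≤ N :=
    (natDegree_pow_le_of_le N (hlin c)).trans_eq (mul_one N)
  rw [two_mul, reflect_mul _ _ (hdeg a) (hdeg b), hpow, hpow]

theorem degree_reflect_lt {P : R[X]} {d p : ℕ} (hdeg : P.natDegree ≤ d + p)
    (hlow : ∀ j ≤ p, P.coeff j = 0) : (reflect (d + p) P).degree < d := by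
  rw [degree_lt_iff_coeff_zero]
  intro m hm
  rw [coeff_reflect]
  rcases le_or_gt m (d + p) with h | h
  · rw [revAt_le h]
    exact hlow _ (by omega)
  · rw [revAt_eq_self_of_lt h]
    exact coeff_eq_zero_of_natDegree_lt (by omega)

theorem sum_C_mul_X_pow_eq_reflect_trunc (c : ℕ → R) (p : ℕ) :
    ∑ n ∈ range (p + 1), C (c (p - n)) * X ^ n =
      reflect p (PowerSeries.trunc (p + 1) (PowerSeries.mk c)) := by
  ext m
  rw [coeff_reflect, PowerSeries.coeff_trunc, finsetSum_coeff]
  simp only [coeff_C_mul_X_pow, sum_ite_eq, mem_range]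
  rcases le_or_gt m p with h | h
  · rw [revAt_le h, if_pos (by omega), if_pos (by omega), PowerSeries.coeff_mk]
  · rw [revAt_eq_self_of_lt h, if_neg (by omega), if_neg (by omega)]

theorem degree_X_pow_sub_mul_reflect_lt {q : R[X]} {d : ℕ} (hq : q.natDegree ≤ d) {c : ℕ → R}
    (hc : PowerSeries.mk c * (q : PowerSeries R) = 1) (p : ℕ) :
    (X ^ (d + p) - (∑ n ∈ range (p + 1), C (c (p - n)) * X ^ n) * reflect d q).degree <
      (d : WithBot ℕ) := by
  set g := PowerSeries.trunc (p + 1) (PowerSeries.mk c)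
  have hg : g.natDegree ≤ p := Nat.lt_succ_iff.mp (PowerSeries.natDegree_trunc_lt _ _)
  have htrunc : PowerSeries.trunc (p + 1) ((g * q : R[X]) : PowerSeries R) = 1 := by
    rw [coe_mul, PowerSeries.trunc_trunc_mul, hc, PowerSeries.trunc_one]
  have hlow (j : ℕ) (hj : j ≤ p) : (g * q).coeff j = (1 : R[X]).coeff j := by
    rw [← htrunc, PowerSeries.coeff_trunc, if_pos (by omega), coeff_coe]
  rw [sum_C_mul_X_pow_eq_reflect_trunc, ← reflect_one, ← reflect_mul _ _ hg hq, add_comm p d,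
    ← reflect_sub]
  refine degree_reflect_lt ?_ fun j hj => by rw [coeff_sub, hlow j hj, sub_self]
  refine (natDegree_sub_le _ _).trans (max_le (by simp) ?_)
  exact natDegree_mul_le.trans (by omega)

end Polynomial

theorem PowerSeries.mk_add_choose_mul_pow_mul_one_sub_C_mul_X_pow_eq_one {R : Type*}
    [CommRing R] (a : R) (d : ℕ) :
    (mk fun k => ((d + k).choose k : R) * a ^ k) * (1 - C a * X) ^ (d + 1) = 1 := by
  have h := congrArg (rescale a) (mk_add_choose_mul_one_sub_pow_eq_one R d)
  rw [map_mul, map_pow, map_sub, map_one, rescale_X, rescale_mk] at h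
  convert h using 3
  funext k
  rw [Nat.choose_symm_add, mul_comm]

theorem PowerSeries.mk_sum_choose_mul_one_sub_C_mul_X_pow_mul_pow_eq_one {R : Type*}
    [CommRing R] {N : ℕ} (hN : 1 ≤ N) (a b : R) :
    (mk fun j => ∑ k ∈ range (j + 1),
        ((N + k - 1).choose k : R) * ((N + j - 1 - k).choose (j - k) : R) * a ^ k * b ^ (j - k)) *
      (((1 - Polynomial.C a * Polynomial.X) ^ N * (1 - Polynomial.C b * Polynomial.X) ^ N : R[X]) :
        PowerSeries R) = 1 := by
  obtain ⟨d, rfl⟩ := Nat.exists_eq_add_of_le' hN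
  have hconv : (mk fun j => ∑ k ∈ range (j + 1),
      ((d + 1 + k - 1).choose k : R) * ((d + 1 + j - 1 - k).choose (j - k) : R) * a ^ k *
        b ^ (j - k)) =
      (mk fun k => ((d + k).choose k : R) * a ^ k) *
        mk fun k => ((d + k).choose k : R) * b ^ k := by
    ext j
    rw [coeff_mul, Nat.sum_antidiagonal_eq_sum_range_succ_mk, coeff_mk]
    refine sum_congr rfl fun k hk => ?_
    rw [mem_range] at hk
    simp only [coeff_mk]
    rw [show d + 1 + k - 1 = d + k by omega, show d + 1 + j - 1 - k = d + (j - k) by omega]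
    ring
  push_cast
  rw [hconv, mul_mul_mul_comm, mk_add_choose_mul_pow_mul_one_sub_C_mul_X_pow_eq_one,
    mk_add_choose_mul_pow_mul_one_sub_C_mul_X_pow_eq_one, one_mul]

theorem stmt_14 (N p : ℕ) (hN : 1 ≤ N) (a b : ℝ) :
    ((Polynomial.X ^ (2 * N + p) -
      (∑ n ∈ Finset.range (p + 1),
        Polynomial.C (∑ k ∈ Finset.range (p - n + 1),
          (Nat.choose (N + k - 1) k : ℝ) * (Nat.choose (N + (p - n) - 1 - k) (p - n - k) : ℝ)
            * a ^ k * b ^ (p - n - k)) * Polynomial.X ^ n) *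
      ((Polynomial.X - Polynomial.C a) ^ N * (Polynomial.X - Polynomial.C b) ^ N)
      : Polynomial ℝ).degree ≤ (2 * N - 1 : ℕ)) := by
  have hdeg : ((1 - C a * X) ^ N * (1 - C b * X) ^ N : ℝ[X]).natDegree ≤ 2 * N := by
    compute_degree
    omega
  have key := degree_X_pow_sub_mul_reflect_lt hdeg
    (PowerSeries.mk_sum_choose_mul_one_sub_C_mul_X_pow_mul_pow_eq_one hN a b) p
  rw [reflect_one_sub_C_mul_X_pow_mul_pow] at key
  rw [degree_le_iff_coeff_zero]
  intro m hm
  have hm' : 2 * N - 1 < m := WithBot.coe_lt_coe.mp hm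
  exact (degree_lt_iff_coeff_zero _ _).1 key m (by omega)
end
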